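/- arXiv:0706.2144 — 4 statements merged into one kernel-verified Lean document; each statement's English description precedes it below -/
import Mathlib

section
/- Let K be a field, let m ≥ r ≥ 1 be integers, let 𝔪 = (x,y) be the maximal ideal of K[x,y] at the origin, and let f ∈ K[x,y] be a polynomial with f ∈ 𝔪^r and f ∉ 𝔪^{r+1} (i.e. f has order exactly r at the origin). Then the K-vector space K[x,y]/(𝔪^m + (f)) has dimension binom(m+1,2) − binom(m−r+1,2). -/
/-!
Multiplication by `f` gives an exact sequence of `K`-vector spaces
`0 → K[x,y]/(𝔪^m : f) → K[x,y]/𝔪^m → K[x,y]/(𝔪^m + (f)) → 0`.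
Since `K[x,y]` is a domain, the order at the origin is additive, so `f` of order exactly `r`
gives `(𝔪^m : f) = 𝔪^(m-r)`. Finally `K[x,y]/𝔪^k` has the monomials of degree `< k` as a basis,
and there are `1 + 2 + ⋯ + k = binom(k+1, 2)` of them.
-/

open MvPolynomial Module Finset

namespace Finsupp

theorem card_degree_lt {σ : Type*} [Fintype σ] [DecidableEq σ] (k : ℕ) :
    Nat.card {d : σ →₀ ℕ // d.degree < k} =
      ∑ j ∈ range k, (Fintype.card σ + j - 1).choose j := by
  have hset : {d : σ →₀ ℕ | d.degree < k} =
      ((range k).biUnion fun j => (univ : Finset σ).finsuppAntidiag j : Set (σ →₀ ℕ)) := by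
    ext d
    simp [degree_eq_sum]
  rw [← Set.coe_ofPred, hset, Nat.card_coe_set_eq, Set.ncard_coe_finset, card_biUnion]
  · simp [card_finsuppAntidiag_nat_eq_choose]
  · intro i _ j _ hij
    refine disjoint_left.mpr fun d hi hj => hij ?_
    exact (mem_finsuppAntidiag.mp hi).1.symm.trans (mem_finsuppAntidiag.mp hj).1

theorem card_degree_lt_fin_two (k : ℕ) :
    Nat.card {d : Fin 2 →₀ ℕ // d.degree < k} = (k + 1).choose 2 := by
  rw [card_degree_lt, Fintype.card_fin, Nat.choose_two_right, ← sum_range_id]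
  simp [add_comm 2, sum_range_succ']

end Finsupp

namespace Ideal

variable {A : Type*} [CommRing A]

theorem torsionOf_mk_eq_colon (I : Ideal A) (f : A) :
    torsionOf A (A ⧸ I) (Quotient.mk I f) = I.colon {f} := by
  ext a
  rw [mem_torsionOf_iff, Submodule.mem_colon_singleton, Algebra.smul_def,
    Quotient.algebraMap_eq, ← map_mul, Quotient.eq_zero_iff_mem, smul_eq_mul]

theorem map_mkQ_sup_span_singleton (I : Ideal A) (f : A) :
    Submodule.map I.mkQ (I ⊔ span {f}) = A ∙ Quotient.mk I f := by
  rw [Submodule.map_sup, Submodule.mkQ_map_self, bot_sup_eq, span, Submodule.map_span,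
    Set.image_singleton]
  rfl

theorem finrank_quotient_sup_span_singleton_add_finrank_quotient_colon (K : Type*) [Field K]
    [Algebra K A] (I : Ideal A) (f : A) [FiniteDimensional K (A ⧸ I)] :
    finrank K (A ⧸ (I ⊔ span {f})) + finrank K (A ⧸ I.colon {f}) = finrank K (A ⧸ I) := by
  set W : Submodule A (A ⧸ I) := A ∙ Quotient.mk I f
  have e₁ : ((A ⧸ I) ⧸ Submodule.map I.mkQ (I ⊔ span {f})) ≃ₗ[A] A ⧸ (I ⊔ span {f}) :=
    Submodule.quotientQuotientEquivQuotient I (I ⊔ span {f}) le_sup_left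
  have e₂ : ((A ⧸ I) ⧸ Submodule.map I.mkQ (I ⊔ span {f})) ≃ₗ[A] (A ⧸ I) ⧸ W :=
    Submodule.quotEquivOfEq _ _ (I.map_mkQ_sup_span_singleton f)
  have e₃ : ((A ⧸ I) ⧸ W.restrictScalars K) ≃ₗ[K] (A ⧸ I) ⧸ W :=
    Submodule.Quotient.restrictScalarsEquiv K W
  have hquot : (A ⧸ (I ⊔ span {f})) ≃ₗ[K] (A ⧸ I) ⧸ W.restrictScalars K :=
    (e₁.symm ≪≫ₗ e₂).restrictScalars K ≪≫ₗ e₃.symm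
  have e₄ : (A ⧸ I.colon {f}) ≃ₗ[A] W :=
    Submodule.quotEquivOfEq _ _ (I.torsionOf_mk_eq_colon f).symm ≪≫ₗ
      quotTorsionOfEquivSpanSingleton A (A ⧸ I) (Quotient.mk I f)
  have hspan : (A ⧸ I.colon {f}) ≃ₗ[K] W.restrictScalars K :=
    e₄.restrictScalars K ≪≫ₗ (W.restrictScalarsEquiv K).symm.restrictScalars K
  rw [hquot.finrank_eq, hspan.finrank_eq, Submodule.finrank_quotient_add_finrank]

end Ideal

namespace MvPolynomial

variable {σ R : Type*}

section Order

variable [CommSemiring R]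

theorem mem_pow_idealOfVars_iff_le_order (n : ℕ) (p : MvPolynomial σ R) :
    p ∈ idealOfVars σ R ^ n ↔ (n : ℕ∞) ≤ (p : MvPowerSeries σ R).order := by
  rw [mem_pow_idealOfVars_iff']
  refine ⟨fun h => MvPowerSeries.nat_le_order fun d hd => by rw [coeff_coe, h d hd],
    fun h d hd => ?_⟩
  rw [← coeff_coe]
  exact MvPowerSeries.coeff_of_lt_order (lt_of_lt_of_le (by exact_mod_cast hd) h)

theorem order_eq_of_mem_pow_idealOfVars_of_notMem {r : ℕ} {f : MvPolynomial σ R}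
    (hf : f ∈ idealOfVars σ R ^ r) (hf' : f ∉ idealOfVars σ R ^ (r + 1)) :
    (f : MvPowerSeries σ R).order = r := by
  rw [mem_pow_idealOfVars_iff_le_order] at hf hf'
  push_cast at hf'
  exact le_antisymm (Order.le_of_lt_add_one (not_le.mp hf')) hf

theorem colon_pow_idealOfVars [NoZeroDivisors R] {m r : ℕ} (hrm : r ≤ m)
    {f : MvPolynomial σ R} (hf : f ∈ idealOfVars σ R ^ r) (hf' : f ∉ idealOfVars σ R ^ (r + 1)) :
    (idealOfVars σ R ^ m).colon {f} = idealOfVars σ R ^ (m - r) := by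
  ext g
  rw [Submodule.mem_colon_singleton, smul_eq_mul, mem_pow_idealOfVars_iff_le_order,
    mem_pow_idealOfVars_iff_le_order, coe_mul, MvPowerSeries.order_mul,
    order_eq_of_mem_pow_idealOfVars_of_notMem hf hf', ← Nat.sub_add_cancel hrm, Nat.cast_add,
    Nat.add_sub_cancel]
  exact ENat.add_le_add_iff_right (ENat.natCast_ne_top r)

end Order

section Quotient

theorem isCompl_restrictSupport_compl [CommSemiring R] (s : Set (σ →₀ ℕ)) :
    IsCompl (restrictSupport R s) (restrictSupport R sᶜ) := by
  have h : IsCompl (Finsupp.supported R R s) (Finsupp.supported R R sᶜ) :=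
    ⟨Finsupp.disjoint_supported_supported isCompl_compl.disjoint,
      Finsupp.codisjoint_supported_supported isCompl_compl.codisjoint⟩
  simp only [restrictSupport, AddMonoidAlgebra.supported_eq_map]
  exact (Submodule.orderIsoMapComap (AddMonoidAlgebra.coeffLinearEquiv R).symm).isCompl h

theorem restrictScalars_pow_idealOfVars [CommSemiring R] (k : ℕ) :
    (idealOfVars σ R ^ k).restrictScalars R = restrictSupport R {d | k ≤ d.degree} := by
  rw [pow_idealOfVars, restrictScalars_restrictSupportIdeal]
  rfl

noncomputable def quotientPowIdealOfVarsEquiv [CommRing R] (k : ℕ) :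
    (MvPolynomial σ R ⧸ idealOfVars σ R ^ k) ≃ₗ[R]
      restrictSupport R {d : σ →₀ ℕ | d.degree < k} :=
  (Submodule.Quotient.restrictScalarsEquiv R _).symm ≪≫ₗ
    Submodule.quotEquivOfEq _ _ (restrictScalars_pow_idealOfVars k) ≪≫ₗ
    Submodule.quotientEquivOfIsCompl _ _ (by
      simpa [Set.compl_ofPred] using isCompl_restrictSupport_compl (R := R) {d | k ≤ d.degree})

variable [Field R]

instance [Finite σ] (k : ℕ) : FiniteDimensional R (MvPolynomial σ R ⧸ idealOfVars σ R ^ k) :=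
  have : Finite {d : σ →₀ ℕ | d.degree < k} := (Finsupp.finite_of_degree_lt k).to_subtype
  have := Module.Finite.of_basis (basisRestrictSupport R {d : σ →₀ ℕ | d.degree < k})
  .equiv (quotientPowIdealOfVarsEquiv k).symm

theorem finrank_quotient_pow_idealOfVars (k : ℕ) :
    finrank R (MvPolynomial σ R ⧸ idealOfVars σ R ^ k) =
      Nat.card {d : σ →₀ ℕ // d.degree < k} := by
  rw [(quotientPowIdealOfVarsEquiv k).finrank_eq,
    finrank_eq_nat_card_basis (basisRestrictSupport R _)]
  rfl

end Quotient

theorem span_X_zero_X_one [CommSemiring R] :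
    Ideal.span {X 0, X 1} = idealOfVars (Fin 2) R := by
  congr 1
  ext p
  simp [Fin.exists_fin_two, eq_comm]

end MvPolynomial

theorem stmt_0_general (K : Type*) [Field K] (m r : ℕ) (hrm : r ≤ m)
    (f : MvPolynomial (Fin 2) K)
    (hf : f ∈ (Ideal.span {X 0, X 1} : Ideal (MvPolynomial (Fin 2) K)) ^ r)
    (hf' : f ∉ (Ideal.span {X 0, X 1} : Ideal (MvPolynomial (Fin 2) K)) ^ (r + 1)) :
    Module.finrank K
      (MvPolynomial (Fin 2) K ⧸
        ((Ideal.span {X 0, X 1} : Ideal (MvPolynomial (Fin 2) K)) ^ m ⊔ Ideal.span {f})) =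
      (m + 1).choose 2 - (m - r + 1).choose 2 := by
  rw [span_X_zero_X_one] at hf hf' ⊢
  have h :=
    (idealOfVars (Fin 2) K ^ m).finrank_quotient_sup_span_singleton_add_finrank_quotient_colon K f
  rw [colon_pow_idealOfVars hrm hf hf', finrank_quotient_pow_idealOfVars,
    finrank_quotient_pow_idealOfVars, Finsupp.card_degree_lt_fin_two,
    Finsupp.card_degree_lt_fin_two] at h
  omega

/-- Lemma 2.5 of the paper, local-algebra form.
Let `K` be a field, `m ≥ r ≥ 1` integers, `𝔪 = (x,y)` the maximal ideal at the origin of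
`K[x,y]`, and `f ∈ 𝔪^r \ 𝔪^{r+1}`.  Then
`dim_K K[x,y]/(𝔪^m + (f)) = C(m+1,2) − C(m−r+1,2)`. -/
theorem stmt_0 (K : Type*) [Field K] (m r : ℕ) (hr : 1 ≤ r) (hrm : r ≤ m)
    (f : MvPolynomial (Fin 2) K)
    (hf : f ∈ (Ideal.span {X 0, X 1} : Ideal (MvPolynomial (Fin 2) K)) ^ r)
    (hf' : f ∉ (Ideal.span {X 0, X 1} : Ideal (MvPolynomial (Fin 2) K)) ^ (r + 1)) :
    Module.finrank K
      (MvPolynomial (Fin 2) K ⧸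
        ((Ideal.span {X 0, X 1} : Ideal (MvPolynomial (Fin 2) K)) ^ m ⊔ Ideal.span {f})) =
      (m + 1).choose 2 - (m - r + 1).choose 2 :=
  stmt_0_general K m r hrm f hf hf'
end

section
/- Let n ≥ 1, and let d, p, t, a, b, r₁,…,r_n, m₁,…,m_n be integers with d ≥ 1, p ≥ 0, 0 ≤ a ≤ b, a + b = d, r_i ≥ 0, m_i ≥ 0, and (d−1)(d−2) = Σ_i r_i(r_i − 1). For 0 ≤ h ≤ p set A_h = Σ_i r_i(m_i − h·r_i) − d(t − h·d) + a − 1 and B_h = Σ_i r_i(m_i − h·r_i) − d(t − h·d) + b − 1. Assume (p+1)·r_i ≤ m_i + 1 for all i, t + 2 ≥ d(p+1), and A_h ≥ 0 for all h = 0,…,p. Then Σ_{h=0}^{p} ( max(0, A_h) + max(0, B_h) ) = max( 0, 2·Σ_i ( (p+1)·r_i·m_i − binom((p+1)·r_i, 2) ) − (p+1)·d·(2t + 2 − (p+1)·d) ). -/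
/-!
Since `a ≤ b`, the hypothesis `A_h ≥ 0` also gives `B_h ≥ 0`, so every `max` on the left drops
and both sides become polynomial. Passing from the `q`-th to the `(q+1)`-st neighbourhood
increases `2·l(Z ∩ qC) − h⁰(Ω(t+1)|_{qC})` by `A_q + B_q + (d−1)(d−2) − Σᵢ rᵢ(rᵢ−1)`, that is, by
exactly `A_q + B_q` thanks to the genus condition. Induction on `q` then gives the
identity, and the right-hand side is nonnegative as a sum of nonnegative terms.
-/

open Finset

variable {ι : Type*} [Fintype ι]

lemma two_mul_sum_sub_mul_pred_div_two (x m : ι → ℤ) :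
    2 * ∑ i, (x i * m i - x i * (x i - 1) / 2) = ∑ i, (2 * x i * m i - x i * (x i - 1)) := by
  rw [mul_sum]
  refine sum_congr rfl fun i _ => ?_
  rw [mul_sub, Int.two_mul_ediv_two_of_even (Int.even_mul_pred_self _), mul_assoc]

lemma sum_range_add_eq_of_genus (r m : ι → ℤ) (d t a b : ℤ) (habd : a + b = d)
    (hgenus : (d - 1) * (d - 2) = ∑ i, r i * (r i - 1)) (q : ℕ) :
    ∑ h ∈ range q,
        ((∑ i, r i * (m i - (h : ℤ) * r i) - d * (t - (h : ℤ) * d) + a - 1) +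
          (∑ i, r i * (m i - (h : ℤ) * r i) - d * (t - (h : ℤ) * d) + b - 1)) =
      ∑ i, (2 * ((q : ℤ) * r i) * m i - ((q : ℤ) * r i) * ((q : ℤ) * r i - 1)) -
        (q : ℤ) * d * (2 * t + 2 - (q : ℤ) * d) := by
  induction q with
  | zero => simp
  | succ q ih =>
    have hstep : ∑ i, (2 * (((q : ℤ) + 1) * r i) * m i -
          (((q : ℤ) + 1) * r i) * (((q : ℤ) + 1) * r i - 1)) =
        ∑ i, (2 * ((q : ℤ) * r i) * m i - ((q : ℤ) * r i) * ((q : ℤ) * r i - 1)) +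
          2 * ∑ i, r i * (m i - (q : ℤ) * r i) - ∑ i, r i * (r i - 1) := by
      rw [mul_sum, ← sum_add_distrib, ← sum_sub_distrib]
      exact sum_congr rfl fun i _ => by ring
    rw [sum_range_succ, ih, Nat.cast_succ, hstep]
    linear_combination habd - hgenus

theorem stmt_7_general (n : ℕ) (p : ℕ) (d t a b : ℤ) (r m : Fin n → ℤ)
    (hab : a ≤ b) (habd : a + b = d)
    (hgenus : (d - 1) * (d - 2) = ∑ i, r i * (r i - 1))
    (hA : ∀ h : ℕ, h ≤ p →
      0 ≤ ∑ i, r i * (m i - (h : ℤ) * r i) - d * (t - (h : ℤ) * d) + a - 1) :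
    ∑ h ∈ Finset.range (p + 1),
        (max 0 (∑ i, r i * (m i - (h : ℤ) * r i) - d * (t - (h : ℤ) * d) + a - 1) +
          max 0 (∑ i, r i * (m i - (h : ℤ) * r i) - d * (t - (h : ℤ) * d) + b - 1)) =
      max 0
        (2 * ∑ i, (((p : ℤ) + 1) * r i * m i -
            (((p : ℤ) + 1) * r i) * (((p : ℤ) + 1) * r i - 1) / 2) -
          ((p : ℤ) + 1) * d * (2 * t + 2 - ((p : ℤ) + 1) * d)) := by
  have hAB : ∀ h ∈ range (p + 1),
      0 ≤ ∑ i, r i * (m i - (h : ℤ) * r i) - d * (t - (h : ℤ) * d) + a - 1 ∧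
        0 ≤ ∑ i, r i * (m i - (h : ℤ) * r i) - d * (t - (h : ℤ) * d) + b - 1 := by
    intro h hh
    have hA' := hA h (Nat.lt_succ_iff.mp (mem_range.mp hh))
    exact ⟨hA', by linarith⟩
  rw [sum_congr rfl fun h hh => by rw [max_eq_right (hAB h hh).1, max_eq_right (hAB h hh).2],
    two_mul_sum_sub_mul_pred_div_two, ← Nat.cast_succ,
    ← sum_range_add_eq_of_genus r m d t a b habd hgenus]
  exact (max_eq_right (sum_nonneg fun h hh => add_nonneg (hAB h hh).1 (hAB h hh).2)).symm

/-- arithmetic content of Proposition 6.6: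
`Σ_{h=0}^{p} δ_h(C,Z,t) = γ((p+1)C, Z, t)`.

Here `A_h = Σᵢ rᵢ(mᵢ − h·rᵢ) − d(t − h·d) + a − 1` and
`B_h = Σᵢ rᵢ(mᵢ − h·rᵢ) − d(t − h·d) + b − 1`, the genus condition
`(d−1)(d−2) = Σᵢ rᵢ(rᵢ−1)` expresses that the strict transform of `C` is smooth and
rational, and `(a,b)` with `a + b = d`, `a ≤ b`, is the splitting type. -/
theorem stmt_7 (n : ℕ) (hn : 1 ≤ n) (p : ℕ) (d t a b : ℤ) (r m : Fin n → ℤ)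
    (hd : 1 ≤ d) (ha : 0 ≤ a) (hab : a ≤ b) (habd : a + b = d)
    (hr : ∀ i, 0 ≤ r i) (hm : ∀ i, 0 ≤ m i)
    (hgenus : (d - 1) * (d - 2) = ∑ i, r i * (r i - 1))
    (hmult : ∀ i, ((p : ℤ) + 1) * r i ≤ m i + 1)
    (ht : d * ((p : ℤ) + 1) ≤ t + 2)
    (hA : ∀ h : ℕ, h ≤ p →
      0 ≤ ∑ i, r i * (m i - (h : ℤ) * r i) - d * (t - (h : ℤ) * d) + a - 1) :
    ∑ h ∈ Finset.range (p + 1),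
        (max 0 (∑ i, r i * (m i - (h : ℤ) * r i) - d * (t - (h : ℤ) * d) + a - 1) +
          max 0 (∑ i, r i * (m i - (h : ℤ) * r i) - d * (t - (h : ℤ) * d) + b - 1)) =
      max 0
        (2 * ∑ i, (((p : ℤ) + 1) * r i * m i -
            (((p : ℤ) + 1) * r i) * (((p : ℤ) + 1) * r i - 1) / 2) -
          ((p : ℤ) + 1) * d * (2 * t + 2 - ((p : ℤ) + 1) * d)) :=
  stmt_7_general n p d t a b r m hab habd hgenus hA
end

section
/- Let K be a field of characteristic 0, let R = K[x,y,z], and let I = (y,z)³ ∩ (x,z)³ ∩ (x,y)³ (the ideal of the fat point scheme 3P₁ + 3P₂ + 3P₃ supported at the three coordinate points of P²). Then dim_K I₅ = 3, dim_K I₆ = 10, and the K-span of R₁·I₅ inside I₆ has dimension exactly 7. In particular the multiplication map μ₅: I₅ ⊗ R₁ → I₆ is neither injective nor surjective, and I requires exactly 3 minimal generators in degree 6. -/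
open MvPolynomial

noncomputable section

/-- The homogeneous ideal `I(P)` of all forms vanishing at the point of `ℙ²` with
homogeneous coordinate vector `p`. -/
def pointIdeal (K : Type*) [Field K] (p : Fin 3 → K) : Ideal (MvPolynomial (Fin 3) K) :=
  Ideal.span {f : MvPolynomial (Fin 3) K | (∃ d, f.IsHomogeneous d) ∧ eval p f = 0}

/-- The fat point ideal `I(Z) = I(P₁)^{m₁} ∩ ⋯ ∩ I(P_n)^{m_n}`. -/
def fatIdeal {K : Type*} [Field K] {n : ℕ} (P : Fin n → Fin 3 → K) (m : Fin n → ℕ) :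
    Ideal (MvPolynomial (Fin 3) K) :=
  ⨅ i, pointIdeal K (P i) ^ m i

/-- The degree-`k` graded piece `I_k` of a (homogeneous) ideal `I ⊆ K[x₀,x₁,x₂]`,
as a `K`-subspace of the polynomial ring. -/
def idealPiece {K : Type*} [Field K] (I : Ideal (MvPolynomial (Fin 3) K)) (k : ℕ) :
    Submodule K (MvPolynomial (Fin 3) K) :=
  Submodule.restrictScalars K I ⊓ homogeneousSubmodule (Fin 3) K k

/-- `dim_K (R/I)_k`, computed as the dimension of `R_k/(I ∩ R_k)`. -/
def quotPieceDim {K : Type*} [Field K] (I : Ideal (MvPolynomial (Fin 3) K)) (k : ℕ) : ℕ :=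
  Module.finrank K
    (↥(homogeneousSubmodule (Fin 3) K k) ⧸
      Submodule.comap (homogeneousSubmodule (Fin 3) K k).subtype (idealPiece I k))

/-- The `K`-span of `R₁ · I_t`, i.e. the image of the multiplication map
`μ_t : I_t ⊗ R₁ → I_{t+1}`. -/
def mulSpan {K : Type*} [Field K] (I : Ideal (MvPolynomial (Fin 3) K)) (t : ℕ) :
    Submodule K (MvPolynomial (Fin 3) K) :=
  Submodule.span K
    {h : MvPolynomial (Fin 3) K |
      ∃ f ∈ homogeneousSubmodule (Fin 3) K 1, ∃ g ∈ idealPiece I t, h = f * g}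

end

/-!
The ideal is monomial: `x^a y^b z^c` lies in `(y,z)³ ∩ (x,z)³ ∩ (x,y)³` iff
`b + c, a + c, a + b ≥ 3`. So `I₅`, `I₆` and the span of `R₁ · I₅` have monomial bases, and
their dimensions count exponent vectors: `I₅` is spanned by `xyz · {xy, xz, yz}`, the span of
`R₁ · I₅` by the six permutations of `x³y²z` together with `x²y²z²`, and `I₆` by these seven
and `x³y³, x³z³, y³z³`.
-/

open scoped Pointwise

namespace Finsupp

lemma isUpperSet_setOf_le_sum {σ : Type*} (s : Finset σ) (n : ℕ) :
    IsUpperSet {m : σ →₀ ℕ | n ≤ ∑ i ∈ s, m i} :=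
  fun _ _ hle h => h.trans (Finset.sum_le_sum fun i _ => hle i)

theorem natCard_eq_card_of_image_coe {σ : Type*} {A : Set (σ →₀ ℕ)} {T : Finset (σ → ℕ)}
    (h : (⇑) '' A = ↑T) : Nat.card A = T.card := by
  rw [← Nat.card_image_of_injective DFunLike.coe_injective, h, Nat.card_coe_set_eq,
    Set.ncard_coe_finset]

theorem image_coe_add {σ : Type*} (A B : Set (σ →₀ ℕ)) :
    (⇑) '' (A + B) = (⇑) '' A + (⇑) '' B :=
  Set.image_add coeFnAddHom

theorem image_coe_preimage_coe {σ : Type*} [Finite σ] (t : Set (σ → ℕ)) :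
    (⇑) '' ((⇑) ⁻¹' t : Set (σ →₀ ℕ)) = t :=
  Set.image_preimage_eq t fun f => ⟨equivFunOnFinite.symm f, by simp⟩

theorem image_coe_setOf_degree_eq (k n : ℕ) :
    (⇑) '' {d : Fin k →₀ ℕ | d.degree = n} = ↑(Finset.Nat.antidiagonalTuple k n) := by
  rw [← image_coe_preimage_coe (Finset.Nat.antidiagonalTuple k n : Set (Fin k → ℕ))]
  congr 1
  ext d
  simp [degree_eq_sum, Finset.Nat.mem_antidiagonalTuple]

end Finsupp

namespace MvPolynomial

section SpanXPow

variable {σ : Type*} (R : Type*) [CommSemiring R]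

lemma mem_restrictSupportIdeal_iff {S : Set (σ →₀ ℕ)} (hS : IsUpperSet S)
    {p : MvPolynomial σ R} :
    p ∈ restrictSupportIdeal R S hS ↔ ↑p.support ⊆ S :=
  Iff.rfl

lemma restrictSupportIdeal_mul_le (s : Finset σ) (a b : ℕ) :
    restrictSupportIdeal R _ (Finsupp.isUpperSet_setOf_le_sum s a) *
        restrictSupportIdeal R _ (Finsupp.isUpperSet_setOf_le_sum s b) ≤
      restrictSupportIdeal R _ (Finsupp.isUpperSet_setOf_le_sum s (a + b)) := by
  classical
  refine Ideal.mul_le.2 fun p hp q hq m hm => ?_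
  obtain ⟨m₁, h₁, m₂, h₂, rfl⟩ := Finset.mem_add.1 (support_mul p q hm)
  simpa [Finset.sum_add_distrib] using add_le_add (hp h₁) (hq h₂)

lemma span_X_image_le_restrictSupportIdeal (s : Finset σ) :
    Ideal.span (X '' ↑s) ≤ restrictSupportIdeal R _ (Finsupp.isUpperSet_setOf_le_sum s 1) := by
  classical
  rw [Ideal.span_le]
  rintro _ ⟨i, hi, rfl⟩
  change monomial _ 1 ∈ restrictSupport R _
  simp [Finsupp.single_apply, Finset.mem_coe.1 hi]

lemma monomial_mem_span_X_image_pow {s : Finset σ} :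
    ∀ {n : ℕ} {m : σ →₀ ℕ}, n ≤ ∑ i ∈ s, m i →
      monomial m (1 : R) ∈ Ideal.span (X '' ↑s) ^ n
  | 0, _, _ => by simp
  | n + 1, m, h => by
    classical
    obtain ⟨i, hi, hmi⟩ : ∃ i ∈ s, m i ≠ 0 := by
      by_contra! h0
      simp [Finset.sum_eq_zero h0] at h
    obtain ⟨m', rfl⟩ : ∃ m', m = Finsupp.single i 1 + m' :=
      ⟨m - Finsupp.single i 1, (add_tsub_cancel_of_le (by simpa [Nat.one_le_iff_ne_zero])).symm⟩
    rw [← mul_one (1 : R), ← monomial_mul, pow_succ']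
    refine Ideal.mul_mem_mul (Ideal.subset_span ⟨i, hi, rfl⟩) (monomial_mem_span_X_image_pow ?_)
    simp [Finset.sum_add_distrib, Finsupp.single_apply, hi] at h
    omega

theorem span_X_image_pow (s : Finset σ) (n : ℕ) :
    Ideal.span (X '' ↑s) ^ n = restrictSupportIdeal R _ (Finsupp.isUpperSet_setOf_le_sum s n) := by
  apply le_antisymm
  · induction n with
    | zero =>
      intro p _
      rw [mem_restrictSupportIdeal_iff]
      exact fun m _ => Nat.zero_le _
    | succ n ih =>
      rw [pow_succ]
      exact (Ideal.mul_mono ih (span_X_image_le_restrictSupportIdeal R s)).trans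
        (restrictSupportIdeal_mul_le R s n 1)
  · intro p hp
    have hspan : restrictSupport R {m : σ →₀ ℕ | n ≤ ∑ i ∈ s, m i} ≤
        (Ideal.span (X '' ↑s) ^ n).restrictScalars R := by
      rw [restrictSupport_eq_span, Submodule.span_le]
      rintro _ ⟨m, hm, rfl⟩
      exact monomial_mem_span_X_image_pow R hm
    exact hspan hp

variable {R}

theorem mem_span_pair_X_pow_iff {i j : σ} (hij : i ≠ j) {n : ℕ} {p : MvPolynomial σ R} :
    p ∈ Ideal.span {X i, X j} ^ n ↔ ∀ m ∈ p.support, n ≤ m i + m j := by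
  classical
  have := span_X_image_pow R {i, j} n
  rw [Finset.coe_pair, Set.image_pair] at this
  rw [this, mem_restrictSupportIdeal_iff]
  simp [Set.subset_def, Finset.sum_pair hij]

end SpanXPow

theorem homogeneousSubmodule_eq_restrictSupport (σ R : Type*) [CommSemiring R] (n : ℕ) :
    homogeneousSubmodule σ R n = restrictSupport R {d | d.degree = n} :=
  homogeneousSubmodule_eq_finsupp_supported σ R n

theorem finrank_restrictSupport {σ R : Type*} [CommRing R] [StrongRankCondition R]
    (S : Set (σ →₀ ℕ)) : Module.finrank R (restrictSupport R S) = Nat.card S :=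
  Module.finrank_eq_nat_card_basis (basisRestrictSupport R S)

end MvPolynomial


def coordFatExponents (n : ℕ) : Set (Fin 3 →₀ ℕ) :=
  {m | n ≤ m 1 + m 2 ∧ n ≤ m 0 + m 2 ∧ n ≤ m 0 + m 1}

-- The degree-`k` part of `coordFatExponents n`, as a computable finset of tuples,
-- so that it can be counted by `decide`.
def coordFatTuples (n k : ℕ) : Finset (Fin 3 → ℕ) :=
  (Finset.Nat.antidiagonalTuple 3 k).filter fun f => n ≤ f 1 + f 2 ∧ n ≤ f 0 + f 2 ∧ n ≤ f 0 + f 1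

theorem image_coe_coordFatExponents_inter (n k : ℕ) :
    (⇑) '' (coordFatExponents n ∩ {d | d.degree = k}) = ↑(coordFatTuples n k) := by
  rw [← Finsupp.image_coe_preimage_coe (coordFatTuples n k : Set (Fin 3 → ℕ))]
  congr 1
  ext d
  simp [coordFatExponents, coordFatTuples, Finsupp.degree_eq_sum, Finset.Nat.mem_antidiagonalTuple]
  tauto

theorem mem_coordFatIdeal_iff {R : Type*} [CommSemiring R] {n : ℕ} {p : MvPolynomial (Fin 3) R} :
    p ∈ Ideal.span {X 1, X 2} ^ n ⊓ Ideal.span {X 0, X 2} ^ n ⊓ Ideal.span {X 0, X 1} ^ n ↔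
      ↑p.support ⊆ coordFatExponents n := by
  simp only [Submodule.mem_inf, mem_span_pair_X_pow_iff (by decide : (1 : Fin 3) ≠ 2),
    mem_span_pair_X_pow_iff (by decide : (0 : Fin 3) ≠ 2),
    mem_span_pair_X_pow_iff (by decide : (0 : Fin 3) ≠ 1)]
  simp only [Set.subset_def, Finset.mem_coe, coordFatExponents, Set.mem_ofPred_eq]
  grind

section Pieces

variable {K : Type*} [Field K]

theorem idealPiece_eq_restrictSupport {I : Ideal (MvPolynomial (Fin 3) K)} {S : Set (Fin 3 →₀ ℕ)}
    (hI : ∀ p, p ∈ I ↔ ↑p.support ⊆ S) (k : ℕ) :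
    idealPiece I k = restrictSupport K (S ∩ {d | d.degree = k}) := by
  ext p
  rw [idealPiece, Submodule.mem_inf, Submodule.restrictScalars_mem, hI,
    homogeneousSubmodule_eq_restrictSupport, mem_restrictSupport_iff, mem_restrictSupport_iff,
    Set.subset_inter_iff]

theorem mulSpan_eq_mul (I : Ideal (MvPolynomial (Fin 3) K)) (t : ℕ) :
    mulSpan I t = homogeneousSubmodule (Fin 3) K 1 * idealPiece I t := by
  rw [mulSpan, Submodule.mul_eq_span_mul_set]
  congr 1
  ext h
  simp [Set.mem_mul, eq_comm]

theorem finrank_idealPiece_of_coordFat {I : Ideal (MvPolynomial (Fin 3) K)} {n : ℕ}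
    (hI : ∀ p, p ∈ I ↔ ↑p.support ⊆ coordFatExponents n) (k : ℕ) :
    Module.finrank K (idealPiece I k) = (coordFatTuples n k).card := by
  rw [idealPiece_eq_restrictSupport hI, finrank_restrictSupport,
    Finsupp.natCard_eq_card_of_image_coe (image_coe_coordFatExponents_inter n k)]

theorem finrank_mulSpan_of_coordFat {I : Ideal (MvPolynomial (Fin 3) K)} {n : ℕ}
    (hI : ∀ p, p ∈ I ↔ ↑p.support ⊆ coordFatExponents n) (t : ℕ) :
    Module.finrank K (mulSpan I t) =
      (Finset.Nat.antidiagonalTuple 3 1 + coordFatTuples n t).card := by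
  rw [mulSpan_eq_mul, idealPiece_eq_restrictSupport hI, homogeneousSubmodule_eq_restrictSupport,
    ← restrictSupport_add, finrank_restrictSupport]
  apply Finsupp.natCard_eq_card_of_image_coe
  rw [Finsupp.image_coe_add, Finsupp.image_coe_setOf_degree_eq,
    image_coe_coordFatExponents_inter, Finset.coe_add]

end Pieces

theorem stmt_9_general (K : Type*) [Field K]
    (I : Ideal (MvPolynomial (Fin 3) K))
    (hI : I = (Ideal.span {X 1, X 2} : Ideal (MvPolynomial (Fin 3) K)) ^ 3 ⊓
        (Ideal.span {X 0, X 2} : Ideal (MvPolynomial (Fin 3) K)) ^ 3 ⊓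
        (Ideal.span {X 0, X 1} : Ideal (MvPolynomial (Fin 3) K)) ^ 3) :
    Module.finrank K ↥(idealPiece I 5) = 3 ∧
    Module.finrank K ↥(idealPiece I 6) = 10 ∧
    Module.finrank K ↥(mulSpan I 5) = 7 := by
  have hmonomial : ∀ p, p ∈ I ↔ ↑p.support ⊆ coordFatExponents 3 :=
    fun p => hI ▸ mem_coordFatIdeal_iff
  rw [finrank_idealPiece_of_coordFat hmonomial, finrank_idealPiece_of_coordFat hmonomial,
    finrank_mulSpan_of_coordFat hmonomial]
  decide

/-- Example 4.4 of the paper: `Z = 3P₁ + 3P₂ + 3P₃`.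
For the fat point ideal `I = (y,z)³ ∩ (x,z)³ ∩ (x,y)³` of triple points at the three
coordinate points of `ℙ²` over a field of characteristic `0`:
`dim I₅ = 3`, `dim I₆ = 10`, and the span of `R₁·I₅` has dimension exactly `7`
(so `μ₅` is neither injective nor surjective, and `I` needs `3` generators in degree 6). -/
theorem stmt_9 (K : Type*) [Field K] [CharZero K]
    (I : Ideal (MvPolynomial (Fin 3) K))
    (hI : I = (Ideal.span {X 1, X 2} : Ideal (MvPolynomial (Fin 3) K)) ^ 3 ⊓
        (Ideal.span {X 0, X 2} : Ideal (MvPolynomial (Fin 3) K)) ^ 3 ⊓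
        (Ideal.span {X 0, X 1} : Ideal (MvPolynomial (Fin 3) K)) ^ 3) :
    Module.finrank K ↥(idealPiece I 5) = 3 ∧
    Module.finrank K ↥(idealPiece I 6) = 10 ∧
    Module.finrank K ↥(mulSpan I 5) = 7 :=
  stmt_9_general K I hI
end

section
/- Let K be an algebraically closed field of characteristic 0. There exist nine distinct points P₁,…,P₉ ∈ P²(K) such that for every integer m ≥ 1, setting I = I(P₁)^m ∩ … ∩ I(P₉)^m in R = K[x,y,z], one has dim_K I_{3m} = 1. -/
open MvPolynomial

/-!
The nine points `(1 : t : t³)`, `t = 1, …, 9`, lie on the cuspidal cubic `C : x₀²x₂ = x₁³`,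
parametrised by `t ↦ (1 : t : t³)`. Let `G` be a form of degree `3m` with multiplicity `m` at
each point. Restricted to `C`, `G` becomes a polynomial `φ(t)` of degree `≤ 9m` whose
coefficient of `t^(9m-1)` vanishes (no monomial of degree `3m` has weight `x₁ + 3x₂` equal to
`9m - 1`). It is divisible by `∏ (t - i)^m`, of degree `9m` and with subleading coefficient
`-45m ≠ 0`, so `φ = 0` and `C ∣ G`. As `C` is smooth at every point, `G / C` has multiplicity
`m - 1` at each of them, and induction on `m` shows that `G` is a multiple of `C^m`.
-/

namespace MvPolynomial

variable {σ R : Type*} [CommSemiring R]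

section Homogeneous

variable {f : MvPolynomial σ R} {n : ℕ}

theorem IsHomogeneous.aeval_mul_left {A : Type*} [CommSemiring A] [Algebra R A]
    (hf : f.IsHomogeneous n) (c : A) (x : σ → A) :
    MvPolynomial.aeval (fun i => c * x i) f = c ^ n * MvPolynomial.aeval x f := by
  conv_lhs => rw [f.as_sum]
  conv_rhs => rw [f.as_sum]
  rw [map_sum, map_sum, Finset.mul_sum]
  refine Finset.sum_congr rfl fun d hd => ?_
  simp only [aeval_monomial, mul_pow, Finsupp.prod_mul]
  rw [show (d.prod fun _ k => c ^ k) = c ^ n by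
    rw [Finsupp.prod, Finset.prod_pow_eq_pow_sum, ← hf.degree_eq_sum_deg_support hd]]
  ring

theorem IsHomogeneous.eq_single_of_mem_support (hf : f.IsHomogeneous n) {d : σ →₀ ℕ}
    (hd : d ∈ f.support) {i : σ} (h : ∀ j, j ≠ i → d j = 0) : d = Finsupp.single i n := by
  have hdi : d = Finsupp.single i (d i) := by
    ext j
    by_cases hj : j = i
    · simp [hj]
    · simp [Ne.symm hj, h j hj]
  have hdeg : d.degree = n := (hf.degree_eq_sum_deg_support hd).symm
  rw [hdi, Finsupp.degree_single] at hdeg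
  rwa [hdeg] at hdi

theorem IsHomogeneous.eval_piSingle_one [DecidableEq σ] (hf : f.IsHomogeneous n) (i : σ) :
    eval (Pi.single i 1) f = coeff (Finsupp.single i n) f := by
  rw [eval_eq, Finset.sum_eq_single (Finsupp.single i n)]
  · rw [Finset.prod_eq_one, mul_one]
    intro j hj
    obtain rfl := Finset.mem_singleton.mp (Finsupp.support_single_subset hj)
    simp
  · intro d hd hne
    obtain ⟨j, hj, hji⟩ : ∃ j ∈ d.support, j ≠ i := by
      by_contra! h
      exact hne (hf.eq_single_of_mem_support hd fun j hj =>
        Finsupp.notMem_support_iff.mp (mt (h j) hj))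
    refine mul_eq_zero_of_right _ (Finset.prod_eq_zero hj ?_)
    simp [hji, Finsupp.mem_support_iff.mp hj]
  · intro h
    rw [notMem_support_iff.mp h, zero_mul]

theorem IsHomogeneous.mem_ideal_span_X_image_compl [DecidableEq σ] (hf : f.IsHomogeneous n)
    {i : σ} (h : eval (Pi.single i 1) f = 0) : f ∈ Ideal.span (X '' {i}ᶜ) := by
  rw [mem_ideal_span_X_image]
  intro d hd
  by_contra! hdi
  rw [hf.eval_piSingle_one, ← hf.eq_single_of_mem_support hd hdi] at h
  exact mem_support_iff.mp hd h

attribute [local instance] MvPolynomial.gradedAlgebra in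
theorem homogeneousComponent_mul_of_isHomogeneous_left {a : ℕ} (hf : f.IsHomogeneous a) (b : ℕ)
    (g : MvPolynomial σ R) :
    homogeneousComponent (a + b) (f * g) = f * homogeneousComponent b g := by
  rw [← decomposition.decompose'_apply, ← decomposition.decompose'_apply]
  have h := DirectSum.coe_decompose_mul_of_left_mem_of_le (homogeneousSubmodule σ R) (b := g)
    (n := a + b) hf le_self_add
  rwa [Nat.add_sub_cancel_left] at h

theorem IsHomogeneous.exists_isHomogeneous_of_dvd {G : MvPolynomial σ R} {a b : ℕ}
    (hf : f.IsHomogeneous a) (hG : G.IsHomogeneous (a + b)) (hdvd : f ∣ G) :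
    ∃ g, g.IsHomogeneous b ∧ G = f * g := by
  obtain ⟨g, rfl⟩ := hdvd
  refine ⟨homogeneousComponent b g, homogeneousComponent_isHomogeneous b g, ?_⟩
  rw [← homogeneousComponent_mul_of_isHomogeneous_left hf, homogeneousComponent_of_mem hG,
    if_pos rfl]

end Homogeneous

section SpanXPow

variable (s : Set σ) {f g c : MvPolynomial σ R} {m : ℕ}

theorem mem_ideal_span_X_image_pow_iff :
    f ∈ Ideal.span (X '' s) ^ m ↔ ∀ d ∈ f.support, m ≤ d.weight (s.indicator 1) := by
  classical
  constructor
  · induction m generalizing f with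
    | zero => simp
    | succ m ih =>
      intro hf
      rw [pow_succ] at hf
      refine Submodule.mul_induction_on hf (fun a ha b hb d hd => ?_) (fun x y hx hy d hd => ?_)
      · obtain ⟨u, hu, v, hv, rfl⟩ := Finset.mem_add.mp (support_mul a b hd)
        obtain ⟨i, hi, hvi⟩ := mem_ideal_span_X_image.mp hb v hv
        have hv1 : 1 ≤ v.weight (s.indicator 1) := by
          rw [Finsupp.weight_apply, Finsupp.sum]
          refine le_trans ?_ (Finset.single_le_sum (fun _ _ => Nat.zero_le _)
            (Finsupp.mem_support_iff.mpr hvi))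
          simp [hi, Nat.one_le_iff_ne_zero, hvi]
        rw [map_add]
        exact Nat.add_le_add (ih ha u hu) hv1
      · rcases Finset.mem_union.mp (support_add hd) with h | h
        exacts [hx d h, hy d h]
  · intro hf
    rw [f.as_sum]
    refine Ideal.sum_mem _ fun d hd => ?_
    rw [monomial_eq]
    refine Ideal.mul_mem_left _ _ (Ideal.pow_le_pow_right (hf d hd) ?_)
    rw [Finsupp.weight_apply, Finsupp.sum, ← Finset.prod_pow_eq_pow_sum, Finsupp.prod]
    refine Ideal.prod_mem_prod fun i _ => ?_
    by_cases hi : i ∈ s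
    · simpa [hi] using Ideal.pow_mem_pow (Ideal.subset_span (Set.mem_image_of_mem X hi)) (d i)
    · simp [hi]

theorem mem_ideal_span_X_image_pow_iff_le_weightedOrder :
    f ∈ Ideal.span (X '' s) ^ m ↔
      (m : ℕ∞) ≤ (f : MvPowerSeries σ R).weightedOrder (s.indicator 1) := by
  rw [mem_ideal_span_X_image_pow_iff]
  constructor
  · intro h
    refine MvPowerSeries.nat_le_weightedOrder _ fun d hd => ?_
    rw [coeff_coe]
    by_contra hne
    exact (h d (mem_support_iff.mpr hne)).not_gt hd
  · intro h d hd
    by_contra! hlt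
    have := MvPowerSeries.coeff_eq_zero_of_lt_weightedOrder (f := (f : MvPowerSeries σ R)) _
      ((ENat.natCast_lt_natCast.mpr hlt).trans_le h)
    exact mem_support_iff.mp hd (by rwa [coeff_coe] at this)

theorem mem_ideal_span_X_image_pow_of_mul_mem [NoZeroDivisors R]
    (hc : c ∉ Ideal.span (X '' s) ^ 2) (h : c * g ∈ Ideal.span (X '' s) ^ (m + 1)) :
    g ∈ Ideal.span (X '' s) ^ m := by
  rw [mem_ideal_span_X_image_pow_iff_le_weightedOrder] at hc h ⊢
  rw [coe_mul, MvPowerSeries.weightedOrder_mul] at h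
  have hc1 : (c : MvPowerSeries σ R).weightedOrder (s.indicator 1) ≤ 1 :=
    Order.le_of_lt_add_one (not_le.mp hc)
  refine (ENat.add_le_add_iff_right ENat.one_ne_top).mp ?_
  calc (m : ℕ∞) + 1 = ↑(m + 1) := by push_cast; rfl
    _ ≤ _ := h
    _ ≤ 1 + _ := by gcongr
    _ = _ := add_comm _ _

end SpanXPow

end MvPolynomial

open Polynomial in
theorem Polynomial.eq_zero_of_monic_dvd_of_natDegree_le {R : Type*} [CommSemiring R]
    [NoZeroDivisors R] {p q : R[X]} (hp : p.Monic) (hnext : p.nextCoeff ≠ 0) (hdvd : p ∣ q)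
    (hdeg : q.natDegree ≤ p.natDegree) (hcoeff : q.coeff (p.natDegree - 1) = 0) : q = 0 := by
  obtain ⟨r, rfl⟩ := hdvd
  have hp0 : 0 < p.natDegree := Nat.pos_of_ne_zero fun h => hnext (by simp [nextCoeff, h])
  by_contra hpr
  have hr : r ≠ 0 := right_ne_zero_of_mul hpr
  rw [hp.natDegree_mul' hr] at hdeg
  obtain ⟨a, rfl⟩ : ∃ a, r = C a := ⟨_, eq_C_of_natDegree_eq_zero (by omega)⟩
  rw [coeff_mul_C, ← nextCoeff_of_natDegree_pos hp0] at hcoeff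
  exact hr (by simpa [hnext] using hcoeff)

section ProjectivePlane

variable {K : Type*} [Field K]

section Shear

/-- For `p 0 = 1`, the change of coordinates moving the point `p` to `(1 : 0 : 0)`. -/
noncomputable def shear (c : Fin 3 → K) : MvPolynomial (Fin 3) K ≃ₐ[K] MvPolynomial (Fin 3) K :=
  AlgEquiv.ofAlgHom (aeval fun j => if j = 0 then X 0 else X j + C (c j) * X 0)
    (aeval fun j => if j = 0 then X 0 else X j - C (c j) * X 0)
    (algHom_ext fun j => by by_cases hj : j = 0 <;> simp [hj])
    (algHom_ext fun j => by by_cases hj : j = 0 <;> simp [hj])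

theorem shear_X (c : Fin 3 → K) (j : Fin 3) :
    shear c (X j) = if j = 0 then X 0 else X j + C (c j) * X 0 := by
  simp [shear]

@[simp]
theorem shear_C (c : Fin 3 → K) (a : K) : shear c (C a) = C a :=
  (shear c).commutes a

theorem MvPolynomial.IsHomogeneous.shear {f : MvPolynomial (Fin 3) K} {n : ℕ}
    (hf : f.IsHomogeneous n) (c : Fin 3 → K) : (shear c f).IsHomogeneous n := by
  have h := hf.aeval (fun j => if j = 0 then X 0 else X j + C (c j) * X 0) (n := 1) fun j => by
    split_ifs
    exacts [isHomogeneous_X K 0, (isHomogeneous_X K j).add ((isHomogeneous_X K 0).C_mul (c j))]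
  rwa [one_mul] at h

theorem eval_piSingle_shear {p : Fin 3 → K} (hp : p 0 = 1) (f : MvPolynomial (Fin 3) K) :
    eval (Pi.single 0 1) (shear p f) = eval p f := by
  have h : (aeval (Pi.single 0 1 : Fin 3 → K)).comp (shear p : _ →ₐ[K] _) = aeval p :=
    algHom_ext fun j => by fin_cases j <;> simp [shear_X, hp]
  simpa using congr($h f)

theorem map_shear_pointIdeal {p : Fin 3 → K} (hp : p 0 = 1) :
    (pointIdeal K p).map (shear p) = Ideal.span (X '' {0}ᶜ) := by
  apply le_antisymm
  · rw [pointIdeal, Ideal.map_span, Ideal.span_le]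
    rintro _ ⟨f, ⟨⟨n, hf⟩, hfp⟩, rfl⟩
    exact (hf.shear p).mem_ideal_span_X_image_compl (by rwa [eval_piSingle_shear hp])
  · rw [Ideal.span_le]
    rintro _ ⟨j, hj, rfl⟩
    have hXj : shear p (X j - C (p j) * X 0) = X j := by
      simp [shear_X, Set.mem_compl_singleton_iff.mp hj]
    rw [← hXj]
    refine Ideal.mem_map_of_mem _ (Ideal.subset_span ⟨⟨1, ?_⟩, ?_⟩)
    · exact (isHomogeneous_X K j).sub ((isHomogeneous_X K 0).C_mul _)
    · simp [hp]

theorem mem_pointIdeal_pow_iff {p : Fin 3 → K} (hp : p 0 = 1) {g : MvPolynomial (Fin 3) K}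
    {m : ℕ} : g ∈ pointIdeal K p ^ m ↔ shear p g ∈ Ideal.span (X '' {0}ᶜ) ^ m := by
  rw [← map_shear_pointIdeal hp, ← Ideal.map_pow, ← Ideal.mem_comap,
    Ideal.comap_map_of_bijective _ (shear p).bijective]

end Shear

section CuspidalCubic

variable (K) in
noncomputable def cuspidalCubic : MvPolynomial (Fin 3) K := X 0 ^ 2 * X 2 - X 1 ^ 3

def cuspPoint (t : K) : Fin 3 → K := ![1, t, t ^ 3]

theorem isHomogeneous_cuspidalCubic : (cuspidalCubic K).IsHomogeneous 3 :=
  ((isHomogeneous_X_pow 0 2).mul (isHomogeneous_X K 2)).sub (isHomogeneous_X_pow 1 3)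

theorem cuspidalCubic_ne_zero : cuspidalCubic K ≠ 0 := fun h => by
  simpa [cuspidalCubic] using congr(eval ![0, 1, 0] $h)

theorem cuspidalCubic_mem_pointIdeal (t : K) : cuspidalCubic K ∈ pointIdeal K (cuspPoint t) :=
  Ideal.subset_span ⟨⟨3, isHomogeneous_cuspidalCubic⟩, by simp [cuspidalCubic, cuspPoint]⟩

theorem smul_cuspPoint_ne {s t : K} (hst : s ≠ t) (c : K) : c • cuspPoint s ≠ cuspPoint t := by
  intro h
  have hc : c = 1 := by simpa [cuspPoint] using congr_fun h 0
  exact hst (by simpa [cuspPoint, hc] using congr_fun h 1)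

/-- The cubic is smooth at `cuspPoint t`: in the shifted coordinates it contains the monomial
`x₀²x₂` of order one. -/
theorem shear_cuspidalCubic_notMem (t : K) :
    shear (cuspPoint t) (cuspidalCubic K) ∉ Ideal.span (X '' {0}ᶜ) ^ 2 := by
  have h : shear (cuspPoint t) (cuspidalCubic K) =
      X 0 ^ 2 * X 2 - X 1 * (X 1 ^ 2 + 3 * C t * X 0 * X 1 + 3 * C t ^ 2 * X 0 ^ 2) := by
    simp [cuspidalCubic, shear_X, cuspPoint]
    ring
  rw [mem_ideal_span_X_image_pow_iff]
  push Not
  refine ⟨Finsupp.single 0 2 + Finsupp.single 2 1, mem_support_iff.mpr ?_, ?_⟩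
  · rw [h, coeff_sub, X_pow_eq_monomial, X, monomial_mul, one_mul, coeff_monomial, if_pos rfl,
      coeff_X_mul']
    simp
  · simp [Finsupp.weight_single]

theorem mem_pointIdeal_pow_of_cuspidalCubic_mul_mem {t : K} {g : MvPolynomial (Fin 3) K}
    {m : ℕ} (h : cuspidalCubic K * g ∈ pointIdeal K (cuspPoint t) ^ (m + 1)) :
    g ∈ pointIdeal K (cuspPoint t) ^ m := by
  rw [mem_pointIdeal_pow_iff rfl] at h ⊢
  rw [map_mul] at h
  exact mem_ideal_span_X_image_pow_of_mul_mem _ (shear_cuspidalCubic_notMem t) h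

end CuspidalCubic

section CuspParam

variable (K) in
noncomputable def cuspParam : MvPolynomial (Fin 3) K →ₐ[K] Polynomial K :=
  aeval ![1, Polynomial.X, Polynomial.X ^ 3]

theorem cuspParam_monomial (d : Fin 3 →₀ ℕ) (a : K) :
    cuspParam K (monomial d a) = Polynomial.C a * Polynomial.X ^ (d 1 + 3 * d 2) := by
  simp [cuspParam, aeval_monomial, Finsupp.prod_fintype, Fin.prod_univ_three, ← pow_mul, pow_add]

theorem cuspParam_eq_sum (G : MvPolynomial (Fin 3) K) :
    cuspParam K G = ∑ d ∈ G.support, Polynomial.C (coeff d G) * Polynomial.X ^ (d 1 + 3 * d 2) := by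
  conv_lhs => rw [G.as_sum]
  simp only [map_sum, cuspParam_monomial]

theorem MvPolynomial.IsHomogeneous.add_add_eq_of_mem_support {G : MvPolynomial (Fin 3) K} {D : ℕ}
    (hG : G.IsHomogeneous D) {d : Fin 3 →₀ ℕ} (hd : d ∈ G.support) : d 0 + d 1 + d 2 = D := by
  rw [← Fin.sum_univ_three, ← Finsupp.degree_eq_sum]
  exact (hG.degree_eq_sum_deg_support hd).symm

theorem natDegree_cuspParam_le {G : MvPolynomial (Fin 3) K} {D : ℕ} (hG : G.IsHomogeneous D) :
    (cuspParam K G).natDegree ≤ 3 * D := by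
  rw [cuspParam_eq_sum]
  refine Polynomial.natDegree_sum_le_of_forall_le _ _ fun d hd => ?_
  refine (Polynomial.natDegree_C_mul_le _ _).trans ?_
  have := hG.add_add_eq_of_mem_support hd
  rw [Polynomial.natDegree_X_pow]
  omega

theorem coeff_cuspParam_three_mul_sub_one {G : MvPolynomial (Fin 3) K} {D : ℕ}
    (hG : G.IsHomogeneous D) (hD : D ≠ 0) : (cuspParam K G).coeff (3 * D - 1) = 0 := by
  rw [cuspParam_eq_sum, Polynomial.finsetSum_coeff]
  refine Finset.sum_eq_zero fun d hd => ?_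
  have := hG.add_add_eq_of_mem_support hd
  rw [Polynomial.coeff_C_mul, Polynomial.coeff_X_pow, if_neg (by omega), mul_zero]

theorem eval_cuspParam (t : K) (G : MvPolynomial (Fin 3) K) :
    (cuspParam K G).eval t = eval (cuspPoint t) G := by
  have h : (Polynomial.aeval t).comp (cuspParam K) = aeval (cuspPoint t) :=
    algHom_ext fun j => by fin_cases j <;> simp [cuspParam, cuspPoint]
  simpa using congr($h G)

theorem X_sub_C_pow_dvd_cuspParam {t : K} {m : ℕ} {G : MvPolynomial (Fin 3) K}
    (hG : G ∈ pointIdeal K (cuspPoint t) ^ m) :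
    (Polynomial.X - Polynomial.C t) ^ m ∣ cuspParam K G := by
  have hmap : (pointIdeal K (cuspPoint t)).map (cuspParam K) ≤
      Ideal.span {Polynomial.X - Polynomial.C t} := by
    rw [pointIdeal, Ideal.map_span, Ideal.span_le]
    rintro _ ⟨f, ⟨-, hf⟩, rfl⟩
    rw [SetLike.mem_coe, Ideal.mem_span_singleton, Polynomial.dvd_iff_isRoot, Polynomial.IsRoot,
      eval_cuspParam, hf]
  have h := Ideal.mem_map_of_mem (cuspParam K) hG
  rw [Ideal.map_pow] at h
  replace h := Ideal.pow_right_mono hmap m h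
  rwa [Ideal.span_singleton_pow, Ideal.mem_span_singleton] at h

theorem X_zero_not_dvd_cuspidalCubic : ¬ X 0 ∣ cuspidalCubic K := fun ⟨u, hu⟩ => by
  simpa [cuspidalCubic] using congr(eval ![0, 1, 0] $hu)

theorem cuspidalCubic_dvd_of_cuspParam_eq_zero {G : MvPolynomial (Fin 3) K} {D : ℕ}
    (hG : G.IsHomogeneous D) (h : cuspParam K G = 0) : cuspidalCubic K ∣ G := by
  -- `F` is the homogenisation of `cuspParam K G` in degree `3D`
  set F : MvPolynomial (Fin 2) K := aeval ![X 1 ^ 3, X 1 ^ 2 * X 0, X 0 ^ 3] G with hF_def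
  have hF : F = 0 := by
    have hhom : F.IsHomogeneous (3 * D) := hG.aeval _ fun j => by
      fin_cases j
      exacts [isHomogeneous_X_pow 1 3, (isHomogeneous_X_pow 1 2).mul (isHomogeneous_X K 0),
        isHomogeneous_X_pow 0 3]
    have hdeh : aeval ![Polynomial.X, 1] F = cuspParam K G := by
      rw [comp_aeval_apply, cuspParam]
      refine congrArg (aeval · G) (funext fun j => ?_)
      fin_cases j <;> simp
    rw [← Polynomial.homogenize_eq_of_isHomogeneous hhom hdeh, h, Polynomial.homogenize_zero]
  -- modulo the cubic, `x₀² • (x₀, x₁, x₂) ≡ (x₀³, x₀²x₁, x₁³)`, so `x₀^(2D) G ≡ F(x₁, x₀) = 0`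
  set π := Ideal.Quotient.mkₐ K (Ideal.span {cuspidalCubic K})
  have hrel : π (X 0) ^ 2 * π (X 2) = π (X 1 ^ 3) := by
    rw [← map_pow, ← map_mul, Ideal.Quotient.mkₐ_eq_mk, Ideal.Quotient.eq]
    exact Ideal.subset_span rfl
  let ι : MvPolynomial (Fin 2) K →ₐ[K] MvPolynomial (Fin 3) K := aeval ![X 1, X 0]
  have hsubst : (fun j : Fin 3 => π (X 0) ^ 2 * π (X j)) =
      fun j => π (ι (![X 1 ^ 3, X 1 ^ 2 * X 0, X 0 ^ 3] j)) := by
    funext j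
    fin_cases j <;> simp [ι, hrel]
    ring
  have hmod : π (X 0 ^ (2 * D) * G) = 0 := by
    rw [map_mul, map_pow, pow_mul, ← aeval_X_left_apply G, comp_aeval_apply,
      ← hG.aeval_mul_left, hsubst, ← comp_aeval_apply, ← comp_aeval_apply, ← hF_def, hF,
      map_zero, map_zero]
  have hcop : IsRelPrime (cuspidalCubic K) (X 0 ^ (2 * D)) :=
    (X_prime.irreducible.isRelPrime_iff_not_dvd.mpr X_zero_not_dvd_cuspidalCubic).symm.pow_right
  exact hcop.dvd_of_dvd_mul_left
    (Ideal.mem_span_singleton.mp (Ideal.Quotient.eq_zero_iff_mem.mp hmod))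

end CuspParam

section NinePoints

variable [CharZero K] {t : Fin 9 → K}

theorem cuspParam_eq_zero_of_mem_pointIdeal_pow (ht : Function.Injective t)
    (hsum : ∑ i, t i ≠ 0) {m : ℕ} (hm : m ≠ 0) {G : MvPolynomial (Fin 3) K}
    (hG : G.IsHomogeneous (3 * m)) (hmem : ∀ i, G ∈ pointIdeal K (cuspPoint (t i)) ^ m) :
    cuspParam K G = 0 := by
  set q : Polynomial K := ∏ i, (Polynomial.X - Polynomial.C (t i)) with hq_def
  have hq : q.Monic := Polynomial.monic_prod_of_monic _ _ fun i _ => Polynomial.monic_X_sub_C _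
  have hdeg : (q ^ m).natDegree = 9 * m := by
    rw [Polynomial.natDegree_pow, hq_def,
      Polynomial.natDegree_prod _ _ fun i _ => Polynomial.X_sub_C_ne_zero (t i)]
    simp [mul_comm]
  refine Polynomial.eq_zero_of_monic_dvd_of_natDegree_le (hq.pow m) ?_ ?_ ?_ ?_
  · rw [hq.nextCoeff_pow, hq_def, Polynomial.prod_X_sub_C_nextCoeff, nsmul_eq_mul]
    exact mul_ne_zero (Nat.cast_ne_zero.mpr hm) (neg_ne_zero.mpr hsum)
  · rw [hq_def, ← Finset.prod_pow]
    exact Fintype.prod_dvd_of_coprime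
      (fun i j hij => (Polynomial.pairwise_coprime_X_sub_C ht hij).pow)
      fun i => X_sub_C_pow_dvd_cuspParam (hmem i)
  · rw [hdeg]
    simpa [← mul_assoc] using natDegree_cuspParam_le hG
  · rw [hdeg]
    simpa [← mul_assoc] using coeff_cuspParam_three_mul_sub_one hG (by omega)

theorem mem_span_cuspidalCubic_pow (ht : Function.Injective t) (hsum : ∑ i, t i ≠ 0) (m : ℕ)
    {G : MvPolynomial (Fin 3) K} (hG : G.IsHomogeneous (3 * m))
    (hmem : ∀ i, G ∈ pointIdeal K (cuspPoint (t i)) ^ m) : G ∈ K ∙ cuspidalCubic K ^ m := by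
  induction m generalizing G with
  | zero =>
    refine Submodule.mem_span_singleton.mpr ⟨coeff 0 G, ?_⟩
    rw [pow_zero, smul_eq_C_mul, mul_one,
      ← totalDegree_eq_zero_iff_eq_C.mp (Nat.le_zero.mp hG.totalDegree_le)]
  | succ m ih =>
    have hG3 : G.IsHomogeneous (3 + 3 * m) := by rwa [show 3 + 3 * m = 3 * (m + 1) by ring]
    have hdvd := cuspidalCubic_dvd_of_cuspParam_eq_zero hG
      (cuspParam_eq_zero_of_mem_pointIdeal_pow ht hsum m.succ_ne_zero hG hmem)
    obtain ⟨G', hG', rfl⟩ := isHomogeneous_cuspidalCubic.exists_isHomogeneous_of_dvd hG3 hdvd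
    obtain ⟨a, rfl⟩ := Submodule.mem_span_singleton.mp
      (ih hG' fun i => mem_pointIdeal_pow_of_cuspidalCubic_mul_mem (hmem i))
    exact Submodule.mem_span_singleton.mpr ⟨a, by rw [pow_succ', mul_smul_comm]⟩

theorem idealPiece_fatIdeal_cuspPoint_eq_span (ht : Function.Injective t) (hsum : ∑ i, t i ≠ 0)
    (m : ℕ) :
    idealPiece (fatIdeal (fun i => cuspPoint (t i)) fun _ => m) (3 * m) =
      K ∙ cuspidalCubic K ^ m := by
  apply le_antisymm
  · rintro G ⟨hGI, hG⟩
    exact mem_span_cuspidalCubic_pow ht hsum m hG (Ideal.mem_iInf.mp hGI)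
  · rw [Submodule.span_singleton_le_iff_mem]
    exact ⟨Ideal.mem_iInf.mpr fun i => Ideal.pow_mem_pow (cuspidalCubic_mem_pointIdeal _) m,
      isHomogeneous_cuspidalCubic.pow m⟩

end NinePoints

end ProjectivePlane

theorem stmt_13_general (K : Type*) [Field K] [CharZero K] :
    ∃ P : Fin 9 → Fin 3 → K,
      (∀ i, P i ≠ 0) ∧
      (∀ i j, i ≠ j → ∀ c : K, c • P i ≠ P j) ∧
      ∀ m : ℕ, 1 ≤ m →
        Module.finrank K ↥(idealPiece (fatIdeal P fun _ => m) (3 * m)) = 1 := by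
  set t : Fin 9 → K := fun i => ((i : ℕ) + 1 : ℕ)
  have ht : Function.Injective t := fun i j h => by simpa [t, Fin.ext_iff] using h
  have hsum : ∑ i, t i ≠ 0 := by
    simp [t, Fin.sum_univ_succ]
    norm_num
  refine ⟨fun i => cuspPoint (t i), fun i h => one_ne_zero (congr_fun h 0),
    fun i j hij => smul_cuspPoint_ne (ht.ne hij), fun m _ => ?_⟩
  rw [idealPiece_fatIdeal_cuspPoint_eq_span ht hsum]
  exact finrank_span_singleton (pow_ne_zero _ cuspidalCubic_ne_zero)

/-- base case `k = 3m` in the proof of Proposition 6.8.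
Over an algebraically closed field of characteristic `0` there exist nine distinct
points of `ℙ²` such that for every `m ≥ 1`, the fat point ideal
`I = I(P₁)^m ∩ ⋯ ∩ I(P₉)^m` satisfies `dim_K I_{3m} = 1`: the only curves of degree
`3m` with nine points of multiplicity `m` are the `m`-fold multiples of the unique
cubic through the nine points. -/
theorem stmt_13 (K : Type*) [Field K] [IsAlgClosed K] [CharZero K] :
    ∃ P : Fin 9 → Fin 3 → K,
      (∀ i, P i ≠ 0) ∧
      (∀ i j, i ≠ j → ∀ c : K, c • P i ≠ P j) ∧
      ∀ m : ℕ, 1 ≤ m →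
        Module.finrank K ↥(idealPiece (fatIdeal P fun _ => m) (3 * m)) = 1 :=
  stmt_13_general K
end
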